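/- arXiv:0710.2149 — 4 statements merged into one kernel-verified Lean document; each statement's English description precedes it below -/
import Mathlib

section
/- Let (E, A) and (F, B) be Lie pseudoalgebras and ψ : A → B an algebra morphism. An element Σᵢ Xᵢ ⊗_A bᵢ + Y of (E ⊗_A B) ⊕ F belongs to the ψ-sum E ⊕_ψ F if and only if Σᵢ ψ(θ_E(Xᵢ)(a)) bᵢ = θ_F(Y)(ψ(a)) for all a ∈ A. -/
/-!
For `d ∈ D`, the map `ψ̃ ∘ anc d` takes values on `a ⊗ b` and on `1 ⊗ ψ(a) b` that differ by
`δ(a) b`, where `δ(a) = μ a (π d).1 - θ_F (π d).2 (ψ a)` depends on `d` only through `π d`.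
Since `J` is spanned by the elements `a ⊗ b - 1 ⊗ ψ(a) b`, `anc d` preserves `J` exactly when
`δ = 0`, and `π` is surjective.
-/

open TensorProduct

theorem TensorProduct.prod_induction_on {R M N P Q : Type*} [CommSemiring R]
    [AddCommMonoid M] [AddCommMonoid N] [AddCommMonoid P] [AddCommMonoid Q]
    [Module R M] [Module R N] [Module R P] [Module R Q]
    {motive : (M ⊗[R] N) × (P ⊗[R] Q) → Prop} (x : (M ⊗[R] N) × (P ⊗[R] Q))
    (tmul : ∀ m n p q, motive (m ⊗ₜ n, p ⊗ₜ q))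
    (add : ∀ x y, motive x → motive y → motive (x + y)) : motive x := by
  have left (u : M ⊗[R] N) : motive (u, 0) := by
    induction u using TensorProduct.induction_on with
    | zero => simpa using tmul 0 0 0 0
    | tmul m n => simpa using tmul m n 0 0
    | add u₁ u₂ h₁ h₂ => simpa using add _ _ h₁ h₂
  have right (v : P ⊗[R] Q) : motive (0, v) := by
    induction v using TensorProduct.induction_on with
    | zero => simpa using tmul 0 0 0 0
    | tmul p q => simpa using tmul 0 0 p q
    | add v₁ v₂ h₁ h₂ => simpa using add _ _ h₁ h₂
  simpa using add _ _ (left x.1) (right x.2)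

section Kernel

variable {K A B : Type*} [CommRing K] [CommRing A] [CommRing B]
  [Algebra K A] [Algebra K B] [Algebra A B]

theorem apply_eq_apply_one_tmul {M : Type*} [AddCommMonoid M] [Module K M]
    (ψt : A ⊗[K] B →ₗ[K] B) (hψt : ∀ a b, ψt (a ⊗ₜ b) = algebraMap A B a * b)
    (f : A ⊗[K] B →ₗ[K] M) (hf : ∀ a b, f (a ⊗ₜ b) = f (1 ⊗ₜ (algebraMap A B a * b)))
    (x : A ⊗[K] B) : f x = f (1 ⊗ₜ ψt x) := by
  induction x using TensorProduct.induction_on with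
  | zero => simp
  | tmul a b => rw [hf, hψt]
  | add x y hx hy => rw [map_add, hx, hy, map_add, tmul_add, map_add]

theorem mapsTo_ker_iff_forall_eq_zero (ψt : A ⊗[K] B →ₐ[K] B)
    (hψt : ∀ a b, ψt (a ⊗ₜ b) = algebraMap A B a * b) (f : A ⊗[K] B →ₗ[K] A ⊗[K] B)
    (δ : A → B) (hδ : ∀ a b, ψt (f (a ⊗ₜ b)) - ψt (f (1 ⊗ₜ (algebraMap A B a * b))) = δ a * b) :
    Set.MapsTo f (RingHom.ker (ψt : A ⊗[K] B →+* B)) (RingHom.ker (ψt : A ⊗[K] B →+* B)) ↔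
      ∀ a, δ a = 0 := by
  constructor
  · intro hf a
    have hj : a ⊗ₜ[K] (1 : B) - 1 ⊗ₜ algebraMap A B a ∈ RingHom.ker (ψt : A ⊗[K] B →+* B) := by
      simp [RingHom.mem_ker, hψt]
    have hfj := hf hj
    rw [SetLike.mem_coe, RingHom.mem_ker, RingHom.coe_coe, map_sub, map_sub] at hfj
    simpa [hfj] using (hδ a 1).symm
  · intro hδ0 j hj
    have hf : ∀ a b, (ψt.toLinearMap ∘ₗ f) (a ⊗ₜ b) =
        (ψt.toLinearMap ∘ₗ f) (1 ⊗ₜ (algebraMap A B a * b)) := fun a b => by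
      simpa [hδ0, sub_eq_zero] using hδ a b
    rw [SetLike.mem_coe, RingHom.mem_ker, RingHom.coe_coe] at hj ⊢
    simpa [hj] using apply_eq_apply_one_tmul ψt.toLinearMap hψt _ hf j

end Kernel
section PsiSum

variable {K A B E F : Type*} [CommRing K] [CommRing A] [CommRing B]
  [Algebra K A] [Algebra K B] [Algebra A B]
  [AddCommGroup E] [Module K E] [Module A E] [AddCommGroup F] [Module K F] [Module B F]

theorem map_anc_tmul_sub_map_anc_one_tmul (θE : E →ₗ[A] Derivation K A A)
    (θF : F →ₗ[B] Derivation K B B)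
    (anc : ((E ⊗[K] B) × (A ⊗[K] F)) → (A ⊗[K] B) →ₗ[K] (A ⊗[K] B))
    (hancadd : ∀ x y, anc (x + y) = anc x + anc y)
    (hanc : ∀ (X : E) (b : B) (a : A) (Y : F) (a' : A) (b' : B),
      anc (X ⊗ₜ b, a ⊗ₜ Y) (a' ⊗ₜ b') = (θE X a') ⊗ₜ (b * b') + (a * a') ⊗ₜ (θF Y b'))
    (ψt : (A ⊗[K] B) →ₐ[K] B) (hψt : ∀ a b, ψt (a ⊗ₜ b) = algebraMap A B a * b)
    (π : ((E ⊗[K] B) × (A ⊗[K] F)) → (B ⊗[A] E) × F) (hπadd : ∀ x y, π (x + y) = π x + π y)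
    (hπ : ∀ (X : E) (b : B) (a : A) (Y : F), π (X ⊗ₜ b, a ⊗ₜ Y) = (b ⊗ₜ X, algebraMap A B a • Y))
    (μ : A → (B ⊗[A] E) →ₗ[B] B)
    (hμ : ∀ (a : A) (b : B) (X : E), μ a (b ⊗ₜ X) = algebraMap A B (θE X a) * b)
    (d : (E ⊗[K] B) × (A ⊗[K] F)) (a : A) (b : B) :
    ψt (anc d (a ⊗ₜ b)) - ψt (anc d (1 ⊗ₜ (algebraMap A B a * b))) =
      (μ a (π d).1 - θF (π d).2 (algebraMap A B a)) * b := by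
  induction d using TensorProduct.prod_induction_on generalizing a b with
  | tmul X b₀ a₀ Y =>
    simp only [hanc, hπ, hψt, hμ, map_add, map_smul, map_mul, Derivation.map_one_eq_zero,
      Derivation.leibniz, Derivation.smul_apply, smul_eq_mul, map_zero, zero_mul, mul_one]
    ring
  | add d₁ d₂ h₁ h₂ =>
    simp only [hancadd, hπadd, LinearMap.add_apply, map_add, Prod.fst_add, Prod.snd_add,
      Derivation.add_apply]
    linear_combination h₁ a b + h₂ a b

theorem surjective_of_map_tmul (π : ((E ⊗[K] B) × (A ⊗[K] F)) → (B ⊗[A] E) × F)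
    (hπadd : ∀ x y, π (x + y) = π x + π y)
    (hπ : ∀ (X : E) (b : B) (a : A) (Y : F), π (X ⊗ₜ b, a ⊗ₜ Y) = (b ⊗ₜ X, algebraMap A B a • Y)) :
    Function.Surjective π := by
  let πhom := AddMonoidHom.mk' π hπadd
  suffices ⊤ ≤ πhom.range from fun t => this trivial
  have left (m : B ⊗[A] E) : (m, 0) ∈ πhom.range := by
    induction m using TensorProduct.induction_on with
    | zero => exact zero_mem _
    | tmul b X => exact ⟨(X ⊗ₜ b, 0 ⊗ₜ 0), by simp only [πhom, AddMonoidHom.mk'_apply, hπ]; simp⟩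
    | add m₁ m₂ h₁ h₂ => simpa using add_mem h₁ h₂
  have right (Y : F) : (0, Y) ∈ πhom.range :=
    ⟨((0 : E) ⊗ₜ (0 : B), (1 : A) ⊗ₜ Y), by simp only [πhom, AddMonoidHom.mk'_apply, hπ]; simp⟩
  rintro ⟨m, Y⟩ -
  simpa using add_mem (left m) (right Y)

end PsiSum

theorem mem_psi_sum_iff_general
    (K A B E F : Type*) [Field K] [CommRing A] [CommRing B]
    [Algebra K A] [Algebra K B] [Algebra A B]
    [LieRing E] [Module K E] [Module A E]
    [LieRing F] [Module K F] [Module B F]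
    (θE : E →ₗ[A] Derivation K A A)
    (θF : F →ₗ[B] Derivation K B B)
    -- the anchor of the direct sum Lie pseudoalgebra D over A ⊗_K B
    (anc : ((E ⊗[K] B) × (A ⊗[K] F)) → (A ⊗[K] B) →ₗ[K] (A ⊗[K] B))
    (hancadd : ∀ x y, anc (x + y) = anc x + anc y)
    (hanc : ∀ (X : E) (b : B) (a : A) (Y : F) (a' : A) (b' : B),
      anc (X ⊗ₜ b, a ⊗ₜ Y) (a' ⊗ₜ b') =
        (θE X a') ⊗ₜ (b * b') + (a * a') ⊗ₜ (θF Y b'))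
    -- the multiplication map ψ̃ : A ⊗_K B → B
    (ψt : (A ⊗[K] B) →ₐ[K] B)
    (hψt : ∀ (a : A) (b : B), ψt (a ⊗ₜ b) = algebraMap A B a * b)
    -- the canonical projection π : D → (E ⊗_A B) ⊕ F
    (π : ((E ⊗[K] B) × (A ⊗[K] F)) → (B ⊗[A] E) × F)
    (hπadd : ∀ x y, π (x + y) = π x + π y)
    (hπ : ∀ (X : E) (b : B) (a : A) (Y : F),
      π (X ⊗ₜ b, a ⊗ₜ Y) = (b ⊗ₜ X, algebraMap A B a • Y))
    -- the pairing μ a (Σ bᵢ ⊗ Xᵢ) = Σ ψ(θ_E(Xᵢ)(a)) bᵢ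
    (μ : A → (B ⊗[A] E) →ₗ[B] B)
    (hμ : ∀ (a : A) (b : B) (X : E), μ a (b ⊗ₜ X) = algebraMap A B (θE X a) * b)
    (t : (B ⊗[A] E) × F) :
    (∃ d : (E ⊗[K] B) × (A ⊗[K] F),
        (∀ j ∈ RingHom.ker (ψt : A ⊗[K] B →+* B),
          anc d j ∈ RingHom.ker (ψt : A ⊗[K] B →+* B)) ∧
        π d = t) ↔
      (∀ a : A, μ a t.1 = θF t.2 (algebraMap A B a)) := by
  have hδ := map_anc_tmul_sub_map_anc_one_tmul θE θF anc hancadd hanc ψt hψt π hπadd hπ μ hμ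
  constructor
  · rintro ⟨d, hd, rfl⟩ a
    exact sub_eq_zero.mp ((mapsTo_ker_iff_forall_eq_zero ψt hψt (anc d) _ (hδ d)).mp hd a)
  · intro h
    obtain ⟨d, rfl⟩ := surjective_of_map_tmul π hπadd hπ t
    exact ⟨d, (mapsTo_ker_iff_forall_eq_zero ψt hψt (anc d) _ (hδ d)).mpr
      fun a => sub_eq_zero.mpr (h a), rfl⟩

/-- Description of the ψ-sum.  Here `ψ = algebraMap A B`,
`D = (E ⊗_K B) ⊕ (A ⊗_K F)` is the direct sum Lie pseudoalgebra over `A ⊗_K B`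
(with anchor `anc`), `J = Ker(ψ̃ : A⊗B → B)`, and `π` is the canonical identification
`D ⊗_{A⊗B} B → (E ⊗_A B) ⊕ F` (the base change `E ⊗_A B` is realised as `B ⊗[A] E`).
An element `Σᵢ Xᵢ ⊗_A bᵢ + Y` of `(E ⊗_A B) ⊕ F` belongs to the ψ-sum `E ⊕_ψ F`
(that is, lies in the image under `π` of `D^J = {d | anc(d)(J) ⊆ J}`) if and only if
`Σᵢ ψ(θ_E(Xᵢ)(a)) bᵢ = θ_F(Y)(ψ(a))` for all `a ∈ A`. -/
theorem mem_psi_sum_iff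
    (K A B E F : Type*) [Field K] [CommRing A] [CommRing B]
    [Algebra K A] [Algebra K B] [Algebra A B] [IsScalarTower K A B]
    [LieRing E] [Module K E] [LieAlgebra K E] [Module A E] [IsScalarTower K A E]
    [LieRing F] [Module K F] [LieAlgebra K F] [Module B F] [IsScalarTower K B F]
    (θE : E →ₗ[A] Derivation K A A)
    (hθE : ∀ X Y : E, θE ⁅X, Y⁆ = ⁅θE X, θE Y⁆)
    (hLeibE : ∀ (X Y : E) (a : A), ⁅X, a • Y⁆ = a • ⁅X, Y⁆ + θE X a • Y)
    (θF : F →ₗ[B] Derivation K B B)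
    (hθF : ∀ X Y : F, θF ⁅X, Y⁆ = ⁅θF X, θF Y⁆)
    (hLeibF : ∀ (X Y : F) (b : B), ⁅X, b • Y⁆ = b • ⁅X, Y⁆ + θF X b • Y)
    -- the anchor of the direct sum Lie pseudoalgebra D over A ⊗_K B
    (anc : ((E ⊗[K] B) × (A ⊗[K] F)) → (A ⊗[K] B) →ₗ[K] (A ⊗[K] B))
    (hancadd : ∀ x y, anc (x + y) = anc x + anc y)
    (hanc : ∀ (X : E) (b : B) (a : A) (Y : F) (a' : A) (b' : B),
      anc (X ⊗ₜ b, a ⊗ₜ Y) (a' ⊗ₜ b') =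
        (θE X a') ⊗ₜ (b * b') + (a * a') ⊗ₜ (θF Y b'))
    -- the multiplication map ψ̃ : A ⊗_K B → B
    (ψt : (A ⊗[K] B) →ₐ[K] B)
    (hψt : ∀ (a : A) (b : B), ψt (a ⊗ₜ b) = algebraMap A B a * b)
    -- the canonical projection π : D → (E ⊗_A B) ⊕ F
    (π : ((E ⊗[K] B) × (A ⊗[K] F)) → (B ⊗[A] E) × F)
    (hπadd : ∀ x y, π (x + y) = π x + π y)
    (hπ : ∀ (X : E) (b : B) (a : A) (Y : F),
      π (X ⊗ₜ b, a ⊗ₜ Y) = (b ⊗ₜ X, algebraMap A B a • Y))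
    -- the pairing μ a (Σ bᵢ ⊗ Xᵢ) = Σ ψ(θ_E(Xᵢ)(a)) bᵢ
    (μ : A → (B ⊗[A] E) →ₗ[B] B)
    (hμ : ∀ (a : A) (b : B) (X : E), μ a (b ⊗ₜ X) = algebraMap A B (θE X a) * b)
    (t : (B ⊗[A] E) × F) :
    (∃ d : (E ⊗[K] B) × (A ⊗[K] F),
        (∀ j ∈ RingHom.ker (ψt : A ⊗[K] B →+* B),
          anc d j ∈ RingHom.ker (ψt : A ⊗[K] B →+* B)) ∧
        π d = t) ↔
      (∀ a : A, μ a t.1 = θF t.2 (algebraMap A B a)) :=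
  mem_psi_sum_iff_general K A B E F θE θF anc hancadd hanc ψt hψt π hπadd hπ μ hμ t
end

section
/- The ψ-sum E ⊕_ψ F = {Σᵢ Xᵢ⊗_A bᵢ + Y ∈ (E⊗_A B) ⊕ F | Σᵢ ψ(θ_E(Xᵢ)(a))bᵢ = θ_F(Y)(ψ(a)) for all a ∈ A} is a Lie pseudoalgebra over B, with anchor (Σᵢ Xᵢ⊗bᵢ + Y) ↦ θ_F(Y), and bracket [Σᵢ Xᵢ⊗bᵢ + Y, Σⱼ X'ⱼ⊗b'ⱼ + Y'] = Σ_{i,j} [Xᵢ,X'ⱼ]⊗bᵢb'ⱼ + Σⱼ X'ⱼ⊗θ_F(Y)(b'ⱼ) − Σᵢ Xᵢ⊗θ_F(Y')(bᵢ) + [Y,Y']. In particular these formulas are well-defined on the described submodule, satisfy the Jacobi identity, and the Leibniz rule with respect to the anchor. -/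
open TensorProduct

set_option linter.unusedSectionVars false
set_option maxHeartbeats 1000000

section Aux

variable {K A B E F : Type*} [Field K] [CommRing A] [CommRing B]
    [Algebra K A] [Algebra K B] [Algebra A B] [IsScalarTower K A B]
    [LieRing E] [Module K E] [LieAlgebra K E] [Module A E] [IsScalarTower K A E]
    [LieRing F] [Module K F] [LieAlgebra K F] [Module B F] [IsScalarTower K B F]

/-- The bracket formula value, for representations indexed by arbitrary finite types. -/
noncomputable def Vgen (θF : F →ₗ[B] Derivation K B B)
    {ι κ : Type} [Fintype ι] [Fintype κ]
    (b : ι → B) (X : ι → E) (b' : κ → B) (X' : κ → E) (Y Y' : F) : B ⊗[A] E :=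
  ∑ i, ∑ j, (b i * b' j) ⊗ₜ ⁅X i, X' j⁆ +
    ∑ j, (θF Y (b' j)) ⊗ₜ X' j - ∑ i, (θF Y' (b i)) ⊗ₜ X i

lemma Vgen_skew (θF : F →ₗ[B] Derivation K B B)
    {ι κ : Type} [Fintype ι] [Fintype κ]
    (b : ι → B) (X : ι → E) (b' : κ → B) (X' : κ → E) (Y Y' : F) :
    Vgen (A := A) θF b X b' X' Y Y' = - Vgen (A := A) θF b' X' b X Y' Y := by
  unfold Vgen
  conv_rhs => rw [Finset.sum_comm]
  have h : ∀ (j : ι) (i : κ), (b' i * b j) ⊗ₜ[A] ⁅X' i, X j⁆ =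
      -((b j * b' i) ⊗ₜ[A] ⁅X j, X' i⁆) := by
    intro j i
    rw [mul_comm, ← TensorProduct.tmul_neg, lie_skew]
  simp only [h, Finset.sum_neg_distrib]
  abel

lemma bracket_smul_left (θE : E →ₗ[A] Derivation K A A)
    (hLeibE : ∀ (X Y : E) (a : A), ⁅X, a • Y⁆ = a • ⁅X, Y⁆ + θE X a • Y)
    (a : A) (X Z : E) : ⁅a • X, Z⁆ = a • ⁅X, Z⁆ - θE Z a • X := by
  rw [← lie_skew (a • X) Z, hLeibE, ← lie_skew X Z, smul_neg]
  abel

/-- The additive map `b ⊗ X ↦ Σⱼ (b b'ⱼ) ⊗ ⁅X, X'ⱼ⁆ − θF Y' (b) ⊗ X`;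
its balancedness over `A` uses the constraint relating `(b', X')` and `Y'`. -/
noncomputable def Hmap (θE : E →ₗ[A] Derivation K A A)
    (hLeibE : ∀ (X Y : E) (a : A), ⁅X, a • Y⁆ = a • ⁅X, Y⁆ + θE X a • Y)
    (θF : F →ₗ[B] Derivation K B B)
    {κ : Type} [Fintype κ] (b' : κ → B) (X' : κ → E) (Y' : F)
    (hc' : ∀ a : A, (∑ j, algebraMap A B (θE (X' j) a) * b' j) =
      θF Y' (algebraMap A B a)) :
    (B ⊗[A] E) →+ (B ⊗[A] E) :=
  TensorProduct.liftAddHom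
    (AddMonoidHom.mk'
      (fun b => AddMonoidHom.mk'
        (fun X => ∑ j, (b * b' j) ⊗ₜ ⁅X, X' j⁆ - (θF Y' b) ⊗ₜ X)
        (by
          intro X Z
          simp only [add_lie, TensorProduct.tmul_add]
          rw [Finset.sum_add_distrib]
          abel))
      (by
        intro b c
        ext X
        simp only [AddMonoidHom.mk'_apply, AddMonoidHom.add_apply]
        simp only [add_mul, map_add, TensorProduct.add_tmul]
        rw [Finset.sum_add_distrib]
        abel))
    (by
      intro a b X
      simp only [AddMonoidHom.mk'_apply]
      have h1 : ∀ j, (b * b' j) ⊗ₜ[A] ⁅a • X, X' j⁆ =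
          a • ((b * b' j) ⊗ₜ[A] ⁅X, X' j⁆) -
            (algebraMap A B (θE (X' j) a) * (b * b' j)) ⊗ₜ[A] X := by
        intro j
        rw [bracket_smul_left θE hLeibE, TensorProduct.tmul_sub, TensorProduct.tmul_smul]
        congr 1
        rw [TensorProduct.tmul_smul, TensorProduct.smul_tmul', Algebra.smul_def]
      have h2 : ∀ j, (a • b * b' j) ⊗ₜ[A] ⁅X, X' j⁆ = a • ((b * b' j) ⊗ₜ[A] ⁅X, X' j⁆) := by
        intro j
        rw [Algebra.smul_def, mul_assoc, ← Algebra.smul_def, TensorProduct.smul_tmul']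
      simp only [h1, h2]
      rw [Finset.sum_sub_distrib]
      have h3 : ∑ j, (algebraMap A B (θE (X' j) a) * (b * b' j)) ⊗ₜ[A] X =
          (b * θF Y' (algebraMap A B a)) ⊗ₜ[A] X := by
        rw [← TensorProduct.sum_tmul]
        congr 1
        rw [← hc', Finset.mul_sum]
        exact Finset.sum_congr rfl fun j _ => by ring
      have h4 : θF Y' (a • b) = algebraMap A B a * θF Y' b + b * θF Y' (algebraMap A B a) := by
        rw [Algebra.smul_def, Derivation.leibniz, smul_eq_mul, smul_eq_mul]
      have h5 : (θF Y' b) ⊗ₜ[A] (a • X) = (algebraMap A B a * θF Y' b) ⊗ₜ[A] X := by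
        rw [TensorProduct.tmul_smul, TensorProduct.smul_tmul', Algebra.smul_def]
      rw [h3, h4, h5, TensorProduct.add_tmul]
      abel)

@[simp] lemma Hmap_tmul (θE : E →ₗ[A] Derivation K A A)
    (hLeibE : ∀ (X Y : E) (a : A), ⁅X, a • Y⁆ = a • ⁅X, Y⁆ + θE X a • Y)
    (θF : F →ₗ[B] Derivation K B B)
    {κ : Type} [Fintype κ] (b' : κ → B) (X' : κ → E) (Y' : F)
    (hc' : ∀ a : A, (∑ j, algebraMap A B (θE (X' j) a) * b' j) =
      θF Y' (algebraMap A B a)) (b : B) (X : E) :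
    Hmap θE hLeibE θF b' X' Y' hc' (b ⊗ₜ X) =
      ∑ j, (b * b' j) ⊗ₜ ⁅X, X' j⁆ - (θF Y' b) ⊗ₜ X := by
  unfold Hmap
  rw [TensorProduct.liftAddHom_tmul]
  rfl


/-- The map `Φ_a : B ⊗[A] E → B`, `b ⊗ X ↦ ψ(θ_E(X)(a)) b`. -/
noncomputable def PhiMap (θE : E →ₗ[A] Derivation K A A) (a : A) : (B ⊗[A] E) →ₗ[A] B :=
  TensorProduct.lift
    (LinearMap.mk₂ A (fun b X => algebraMap A B (θE X a) * b)
      (fun b c X => by ring)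
      (fun a' b X => by simp [Algebra.smul_def]; ring)
      (fun b X Z => by simp [add_mul])
      (fun a' b X => by
        simp [Algebra.smul_def, map_mul]
        ring))

@[simp] lemma PhiMap_tmul (θE : E →ₗ[A] Derivation K A A) (a : A) (b : B) (X : E) :
    PhiMap (K := K) θE a (b ⊗ₜ X) = algebraMap A B (θE X a) * b := rfl

lemma PhiMap_smul (θE : E →ₗ[A] Derivation K A A) (a : A) (c : B) (x : B ⊗[A] E) :
    PhiMap (K := K) θE a (c • x) = c * PhiMap (K := K) θE a x := by
  induction x using TensorProduct.induction_on with
  | zero => simp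
  | tmul b X => rw [TensorProduct.smul_tmul']; simp [smul_eq_mul]; ring
  | add x y hx hy => rw [smul_add, map_add, hx, hy, map_add, mul_add]

lemma exists_rep (x : B ⊗[A] E) :
    ∃ (n : ℕ) (b : Fin n → B) (X : Fin n → E), x = ∑ i, b i ⊗ₜ X i := by
  induction x using TensorProduct.induction_on with
  | zero => exact ⟨0, ![], ![], by simp⟩
  | tmul b X => exact ⟨1, fun _ => b, fun _ => X, by simp⟩
  | add x y hx hy =>
    obtain ⟨n, b, X, rfl⟩ := hx
    obtain ⟨m, c, Z, rfl⟩ := hy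
    refine ⟨n + m, Fin.append b c, Fin.append X Z, ?_⟩
    rw [Fin.sum_univ_add]
    simp [Fin.append_left, Fin.append_right]

variable (θE : E →ₗ[A] Derivation K A A)
    (hLeibE : ∀ (X Y : E) (a : A), ⁅X, a • Y⁆ = a • ⁅X, Y⁆ + θE X a • Y)
    (θF : F →ₗ[B] Derivation K B B)

include θE hLeibE θF in
lemma Vgen_eq_Hmap {ι κ : Type} [Fintype ι] [Fintype κ]
    (b : ι → B) (X : ι → E) (b' : κ → B) (X' : κ → E) (Y Y' : F)
    (hc' : ∀ a : A, (∑ j, algebraMap A B (θE (X' j) a) * b' j) =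
      θF Y' (algebraMap A B a)) :
    Vgen (A := A) θF b X b' X' Y Y' =
      Hmap θE hLeibE θF b' X' Y' hc' (∑ i, b i ⊗ₜ X i) + ∑ j, (θF Y (b' j)) ⊗ₜ X' j := by
  rw [map_sum]
  simp only [Hmap_tmul]
  rw [Finset.sum_sub_distrib]
  unfold Vgen
  abel

include θE hLeibE θF in
lemma Vgen_left_indep {ι ι₂ κ : Type} [Fintype ι] [Fintype ι₂] [Fintype κ]
    (b : ι → B) (X : ι → E) (b₂ : ι₂ → B) (X₂ : ι₂ → E)
    (b' : κ → B) (X' : κ → E) (Y Y' : F)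
    (hc' : ∀ a : A, (∑ j, algebraMap A B (θE (X' j) a) * b' j) =
      θF Y' (algebraMap A B a))
    (hsum : (∑ i, b i ⊗ₜ X i : B ⊗[A] E) = ∑ i, b₂ i ⊗ₜ X₂ i) :
    Vgen (A := A) θF b X b' X' Y Y' = Vgen (A := A) θF b₂ X₂ b' X' Y Y' := by
  rw [Vgen_eq_Hmap θE hLeibE θF b X b' X' Y Y' hc',
    Vgen_eq_Hmap θE hLeibE θF b₂ X₂ b' X' Y Y' hc', hsum]

include θE θF in
lemma rep_constraint {ι : Type} [Fintype ι] (b : ι → B) (X : ι → E) (Y : F)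
    (x : B ⊗[A] E) (hx : x = ∑ i, b i ⊗ₜ X i)
    (hY : ∀ a : A, PhiMap (K := K) θE a x = θF Y (algebraMap A B a)) :
    ∀ a : A, (∑ i, algebraMap A B (θE (X i) a) * b i) = θF Y (algebraMap A B a) := by
  intro a
  rw [← hY a, hx, map_sum]
  simp only [PhiMap_tmul]

include θE hLeibE θF in
lemma Vgen_indep {ι ι₂ κ κ₂ : Type} [Fintype ι] [Fintype ι₂] [Fintype κ] [Fintype κ₂]
    (b : ι → B) (X : ι → E) (b₂ : ι₂ → B) (X₂ : ι₂ → E)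
    (b' : κ → B) (X' : κ → E) (b₂' : κ₂ → B) (X₂' : κ₂ → E) (Y Y' : F)
    (x x' : B ⊗[A] E)
    (hY : ∀ a : A, PhiMap (K := K) θE a x = θF Y (algebraMap A B a))
    (hY' : ∀ a : A, PhiMap (K := K) θE a x' = θF Y' (algebraMap A B a))
    (hx : x = ∑ i, b i ⊗ₜ X i) (hx₂ : x = ∑ i, b₂ i ⊗ₜ X₂ i)
    (hx' : x' = ∑ j, b' j ⊗ₜ X' j) (hx₂' : x' = ∑ j, b₂' j ⊗ₜ X₂' j) :
    Vgen (A := A) θF b X b' X' Y Y' = Vgen (A := A) θF b₂ X₂ b₂' X₂' Y Y' := by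
  have hc' := rep_constraint θE θF b' X' Y' x' hx' hY'
  have hc₂ := rep_constraint θE θF b₂ X₂ Y x hx₂ hY
  rw [Vgen_left_indep θE hLeibE θF b X b₂ X₂ b' X' Y Y' hc' (hx.symm.trans hx₂),
    Vgen_skew, Vgen_left_indep θE hLeibE θF b' X' b₂' X₂' b₂ X₂ Y' Y hc₂
      (hx'.symm.trans hx₂'), ← Vgen_skew]

include θE θF in
lemma Phi_Vgen
    (hθE : ∀ X Y : E, θE ⁅X, Y⁆ = ⁅θE X, θE Y⁆)
    (hθF : ∀ X Y : F, θF ⁅X, Y⁆ = ⁅θF X, θF Y⁆)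
    {ι κ : Type} [Fintype ι] [Fintype κ]
    (b : ι → B) (X : ι → E) (b' : κ → B) (X' : κ → E) (Y Y' : F)
    (hc : ∀ a : A, (∑ i, algebraMap A B (θE (X i) a) * b i) =
      θF Y (algebraMap A B a))
    (hc' : ∀ a : A, (∑ j, algebraMap A B (θE (X' j) a) * b' j) =
      θF Y' (algebraMap A B a)) (a : A) :
    PhiMap (K := K) θE a (Vgen (A := A) θF b X b' X' Y Y') =
      θF ⁅Y, Y'⁆ (algebraMap A B a) := by
  have e1 : PhiMap (K := K) θE a (Vgen (A := A) θF b X b' X' Y Y')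
      = ∑ i, ∑ j, (algebraMap A B (θE (X i) (θE (X' j) a)) -
            algebraMap A B (θE (X' j) (θE (X i) a))) * (b i * b' j)
        + ∑ j, algebraMap A B (θE (X' j) a) * θF Y (b' j)
        - ∑ i, algebraMap A B (θE (X i) a) * θF Y' (b i) := by
    unfold Vgen
    rw [map_sub, map_add, map_sum, map_sum, map_sum]
    simp only [map_sum, PhiMap_tmul]
    congr 1
    congr 1
    refine Finset.sum_congr rfl fun i _ => Finset.sum_congr rfl fun j _ => ?_
    rw [hθE, Derivation.commutator_apply, map_sub]
  rw [e1, hθF, Derivation.commutator_apply]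
  have e2 : θF Y (θF Y' (algebraMap A B a)) =
      ∑ j, (algebraMap A B (θE (X' j) a) * θF Y (b' j) +
        b' j * ∑ i, algebraMap A B (θE (X i) (θE (X' j) a)) * b i) := by
    rw [← hc' a, map_sum]
    refine Finset.sum_congr rfl fun j _ => ?_
    rw [Derivation.leibniz, smul_eq_mul, smul_eq_mul, hc (θE (X' j) a)]
  have e3 : θF Y' (θF Y (algebraMap A B a)) =
      ∑ i, (algebraMap A B (θE (X i) a) * θF Y' (b i) +
        b i * ∑ j, algebraMap A B (θE (X' j) (θE (X i) a)) * b' j) := by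
    rw [← hc a, map_sum]
    refine Finset.sum_congr rfl fun i _ => ?_
    rw [Derivation.leibniz, smul_eq_mul, smul_eq_mul, hc' (θE (X i) a)]
  rw [e2, e3, Finset.sum_add_distrib, Finset.sum_add_distrib]
  have e4 : ∑ i, ∑ j, (algebraMap A B (θE (X i) (θE (X' j) a)) -
        algebraMap A B (θE (X' j) (θE (X i) a))) * (b i * b' j)
      = ∑ j, b' j * ∑ i, algebraMap A B (θE (X i) (θE (X' j) a)) * b i
        - ∑ i, b i * ∑ j, algebraMap A B (θE (X' j) (θE (X i) a)) * b' j := by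
    simp only [Finset.mul_sum, sub_mul, Finset.sum_sub_distrib]
    congr 1
    · rw [Finset.sum_comm]
      exact Finset.sum_congr rfl fun j _ => Finset.sum_congr rfl fun i _ => by ring
    · exact Finset.sum_congr rfl fun i _ => Finset.sum_congr rfl fun j _ => by ring
  rw [e4]
  ring

lemma Vgen_smul_right (θF : F →ₗ[B] Derivation K B B)
    {ι κ : Type} [Fintype ι] [Fintype κ]
    (b : ι → B) (X : ι → E) (b' : κ → B) (X' : κ → E) (Y Y' : F) (c : B) :
    Vgen (A := A) θF b X (fun j => c * b' j) X' Y (c • Y') =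
      c • Vgen (A := A) θF b X b' X' Y Y' + θF Y c • ∑ j, b' j ⊗ₜ X' j := by
  unfold Vgen
  rw [smul_sub, smul_add, Finset.smul_sum, Finset.smul_sum, Finset.smul_sum]
  have h1 : ∀ i, ∑ j, (b i * (c * b' j)) ⊗ₜ[A] ⁅X i, X' j⁆ =
      ∑ j, c • ((b i * b' j) ⊗ₜ[A] ⁅X i, X' j⁆) := by
    intro i
    refine Finset.sum_congr rfl fun j _ => ?_
    rw [TensorProduct.smul_tmul', smul_eq_mul]
    ring_nf
  have h2 : ∑ j, (θF Y (c * b' j)) ⊗ₜ[A] X' j =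
      ∑ j, (c • ((θF Y (b' j)) ⊗ₜ[A] X' j) + θF Y c • (b' j ⊗ₜ[A] X' j)) := by
    refine Finset.sum_congr rfl fun j _ => ?_
    rw [Derivation.leibniz, smul_eq_mul, smul_eq_mul, TensorProduct.add_tmul,
      TensorProduct.smul_tmul', TensorProduct.smul_tmul', smul_eq_mul, smul_eq_mul,
      mul_comm (b' j) (θF Y c)]
  have h3 : ∀ i, (θF (c • Y') (b i)) ⊗ₜ[A] X i = c • ((θF Y' (b i)) ⊗ₜ[A] X i) := by
    intro i
    rw [map_smul]
    rw [TensorProduct.smul_tmul', smul_eq_mul]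
    congr 1
  simp only [h1, h2, h3, Finset.sum_add_distrib, Finset.smul_sum]
  abel

/-- Coefficients of the canonical representation of `Vgen`. -/
noncomputable def repc (θF : F →ₗ[B] Derivation K B B) {ι κ : Type}
    (b : ι → B) (b' : κ → B) (Y Y' : F) : (ι × κ) ⊕ (κ ⊕ ι) → B :=
  Sum.elim (fun p => b p.1 * b' p.2)
    (Sum.elim (fun j => θF Y (b' j)) (fun i => -θF Y' (b i)))

/-- Vectors of the canonical representation of `Vgen`. -/
noncomputable def repZ {ι κ : Type} (X : ι → E) (X' : κ → E) : (ι × κ) ⊕ (κ ⊕ ι) → E :=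
  Sum.elim (fun p => ⁅X p.1, X' p.2⁆) (Sum.elim X' X)

lemma rep_sum (θF : F →ₗ[B] Derivation K B B) {ι κ : Type} [Fintype ι] [Fintype κ]
    (b : ι → B) (X : ι → E) (b' : κ → B) (X' : κ → E) (Y Y' : F) :
    (∑ s, repc θF b b' Y Y' s ⊗ₜ repZ X X' s : B ⊗[A] E) =
      Vgen (A := A) θF b X b' X' Y Y' := by
  unfold Vgen repc repZ
  rw [Fintype.sum_sum_type, Fintype.sum_sum_type, Fintype.sum_prod_type]
  simp only [Sum.elim_inl, Sum.elim_inr, TensorProduct.neg_tmul, Finset.sum_neg_distrib]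
  abel

lemma Vgen_expand_right (θF : F →ₗ[B] Derivation K B B)
    {ι κ lam : Type} [Fintype ι] [Fintype κ] [Fintype lam]
    (b : ι → B) (X : ι → E) (b' : κ → B) (X' : κ → E) (b'' : lam → B) (X'' : lam → E)
    (Y Y' Y'' W : F) :
    Vgen (A := A) θF b X (repc θF b' b'' Y' Y'') (repZ X' X'') Y W =
      ∑ i, ∑ j, ∑ k, (b i * (b' j * b'' k)) ⊗ₜ ⁅X i, ⁅X' j, X'' k⁆⁆
      + ∑ i, ∑ k, (b i * θF Y' (b'' k)) ⊗ₜ ⁅X i, X'' k⁆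
      - ∑ i, ∑ j, (b i * θF Y'' (b' j)) ⊗ₜ ⁅X i, X' j⁆
      + ∑ j, ∑ k, (θF Y (b' j * b'' k)) ⊗ₜ ⁅X' j, X'' k⁆
      + ∑ k, (θF Y (θF Y' (b'' k))) ⊗ₜ X'' k
      - ∑ j, (θF Y (θF Y'' (b' j))) ⊗ₜ X' j
      - ∑ i, (θF W (b i)) ⊗ₜ X i := by
  unfold Vgen repc repZ
  simp only [Fintype.sum_sum_type, Fintype.sum_prod_type, Sum.elim_inl, Sum.elim_inr,
    mul_neg, map_neg, TensorProduct.neg_tmul, Finset.sum_neg_distrib,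
    Finset.sum_add_distrib, Finset.sum_sub_distrib]
  abel

lemma Vgen_expand_left (θF : F →ₗ[B] Derivation K B B)
    {ι κ lam : Type} [Fintype ι] [Fintype κ] [Fintype lam]
    (b : ι → B) (X : ι → E) (b' : κ → B) (X' : κ → E) (b'' : lam → B) (X'' : lam → E)
    (Y Y' Y'' W : F) :
    Vgen (A := A) θF (repc θF b b' Y Y') (repZ X X') b'' X'' W Y'' =
      ∑ i, ∑ j, ∑ k, ((b i * b' j) * b'' k) ⊗ₜ ⁅⁅X i, X' j⁆, X'' k⁆
      + ∑ j, ∑ k, (θF Y (b' j) * b'' k) ⊗ₜ ⁅X' j, X'' k⁆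
      - ∑ i, ∑ k, (θF Y' (b i) * b'' k) ⊗ₜ ⁅X i, X'' k⁆
      + ∑ k, (θF W (b'' k)) ⊗ₜ X'' k
      - ∑ i, ∑ j, (θF Y'' (b i * b' j)) ⊗ₜ ⁅X i, X' j⁆
      - ∑ j, (θF Y'' (θF Y (b' j))) ⊗ₜ X' j
      + ∑ i, (θF Y'' (θF Y' (b i))) ⊗ₜ X i := by
  unfold Vgen repc repZ
  simp only [Fintype.sum_sum_type, Fintype.sum_prod_type, Sum.elim_inl, Sum.elim_inr,
    neg_mul, map_neg, TensorProduct.neg_tmul, Finset.sum_neg_distrib,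
    Finset.sum_add_distrib, Finset.sum_sub_distrib]
  abel

lemma Vgen_jacobi (θF : F →ₗ[B] Derivation K B B)
    (hθF : ∀ X Y : F, θF ⁅X, Y⁆ = ⁅θF X, θF Y⁆)
    {ι κ lam : Type} [Fintype ι] [Fintype κ] [Fintype lam]
    (b : ι → B) (X : ι → E) (b' : κ → B) (X' : κ → E) (b'' : lam → B) (X'' : lam → E)
    (Y Y' Y'' : F) :
    Vgen (A := A) θF b X (repc θF b' b'' Y' Y'') (repZ X' X'') Y ⁅Y', Y''⁆ =
      Vgen (A := A) θF (repc θF b b' Y Y') (repZ X X') b'' X'' ⁅Y, Y'⁆ Y''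
      + Vgen (A := A) θF b' X' (repc θF b b'' Y Y'') (repZ X X'') Y' ⁅Y, Y''⁆ := by
  rw [Vgen_expand_right, Vgen_expand_left, Vgen_expand_right]
  have hA1 : ∑ i, ∑ j, ∑ k, (b i * (b' j * b'' k)) ⊗ₜ[A] ⁅X i, ⁅X' j, X'' k⁆⁆ =
      ∑ i, ∑ j, ∑ k, ((b i * b' j) * b'' k) ⊗ₜ[A] ⁅⁅X i, X' j⁆, X'' k⁆
      + ∑ j, ∑ i, ∑ k, (b' j * (b i * b'' k)) ⊗ₜ[A] ⁅X' j, ⁅X i, X'' k⁆⁆ := by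
    rw [Finset.sum_comm (s := Finset.univ) (t := Finset.univ)
      (f := fun j i => ∑ k, (b' j * (b i * b'' k)) ⊗ₜ[A] ⁅X' j, ⁅X i, X'' k⁆⁆)]
    rw [← Finset.sum_add_distrib]
    refine Finset.sum_congr rfl fun i _ => ?_
    rw [← Finset.sum_add_distrib]
    refine Finset.sum_congr rfl fun j _ => ?_
    rw [← Finset.sum_add_distrib]
    refine Finset.sum_congr rfl fun k _ => ?_
    rw [leibniz_lie, TensorProduct.tmul_add]
    congr 1
    · congr 1; ring
    · congr 1; ring
  have hC4 : ∑ i, ∑ k, (θF Y' (b i * b'' k)) ⊗ₜ[A] ⁅X i, X'' k⁆ =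
      ∑ i, ∑ k, (b i * θF Y' (b'' k)) ⊗ₜ[A] ⁅X i, X'' k⁆
      + ∑ i, ∑ k, (θF Y' (b i) * b'' k) ⊗ₜ[A] ⁅X i, X'' k⁆ := by
    rw [← Finset.sum_add_distrib]
    refine Finset.sum_congr rfl fun i _ => ?_
    rw [← Finset.sum_add_distrib]
    refine Finset.sum_congr rfl fun k _ => ?_
    rw [Derivation.leibniz, smul_eq_mul, smul_eq_mul, TensorProduct.add_tmul]
    congr 1
    congr 1; ring
  have hB5 : ∑ i, ∑ j, (θF Y'' (b i * b' j)) ⊗ₜ[A] ⁅X i, X' j⁆ =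
      ∑ i, ∑ j, (b i * θF Y'' (b' j)) ⊗ₜ[A] ⁅X i, X' j⁆
      + ∑ i, ∑ j, (b' j * θF Y'' (b i)) ⊗ₜ[A] ⁅X i, X' j⁆ := by
    rw [← Finset.sum_add_distrib]
    refine Finset.sum_congr rfl fun i _ => ?_
    rw [← Finset.sum_add_distrib]
    refine Finset.sum_congr rfl fun j _ => ?_
    rw [Derivation.leibniz, smul_eq_mul, smul_eq_mul, TensorProduct.add_tmul]
  have hC3 : ∑ j, ∑ i, (b' j * θF Y'' (b i)) ⊗ₜ[A] ⁅X' j, X i⁆ =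
      - ∑ i, ∑ j, (b' j * θF Y'' (b i)) ⊗ₜ[A] ⁅X i, X' j⁆ := by
    rw [Finset.sum_comm]
    rw [← Finset.sum_neg_distrib]
    refine Finset.sum_congr rfl fun i _ => ?_
    rw [← Finset.sum_neg_distrib]
    refine Finset.sum_congr rfl fun j _ => ?_
    rw [← TensorProduct.tmul_neg, lie_skew]
  have hA4 : ∑ j, ∑ k, (θF Y (b' j * b'' k)) ⊗ₜ[A] ⁅X' j, X'' k⁆ =
      ∑ j, ∑ k, (θF Y (b' j) * b'' k) ⊗ₜ[A] ⁅X' j, X'' k⁆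
      + ∑ j, ∑ k, (b' j * θF Y (b'' k)) ⊗ₜ[A] ⁅X' j, X'' k⁆ := by
    rw [← Finset.sum_add_distrib]
    refine Finset.sum_congr rfl fun j _ => ?_
    rw [← Finset.sum_add_distrib]
    refine Finset.sum_congr rfl fun k _ => ?_
    rw [Derivation.leibniz, smul_eq_mul, smul_eq_mul, TensorProduct.add_tmul]
    rw [add_comm]
    congr 1
    congr 1; ring
  have hB4 : ∑ k, (θF ⁅Y, Y'⁆ (b'' k)) ⊗ₜ[A] X'' k =
      ∑ k, (θF Y (θF Y' (b'' k))) ⊗ₜ[A] X'' k - ∑ k, (θF Y' (θF Y (b'' k))) ⊗ₜ[A] X'' k := by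
    rw [← Finset.sum_sub_distrib]
    refine Finset.sum_congr rfl fun k _ => ?_
    rw [hθF, Derivation.commutator_apply, TensorProduct.sub_tmul]
  have hC7 : ∑ j, (θF ⁅Y, Y''⁆ (b' j)) ⊗ₜ[A] X' j =
      ∑ j, (θF Y (θF Y'' (b' j))) ⊗ₜ[A] X' j - ∑ j, (θF Y'' (θF Y (b' j))) ⊗ₜ[A] X' j := by
    rw [← Finset.sum_sub_distrib]
    refine Finset.sum_congr rfl fun j _ => ?_
    rw [hθF, Derivation.commutator_apply, TensorProduct.sub_tmul]
  have hA7 : ∑ i, (θF ⁅Y', Y''⁆ (b i)) ⊗ₜ[A] X i =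
      ∑ i, (θF Y' (θF Y'' (b i))) ⊗ₜ[A] X i - ∑ i, (θF Y'' (θF Y' (b i))) ⊗ₜ[A] X i := by
    rw [← Finset.sum_sub_distrib]
    refine Finset.sum_congr rfl fun i _ => ?_
    rw [hθF, Derivation.commutator_apply, TensorProduct.sub_tmul]
  rw [hA1, hC4, hB5, hC3, hA4, hB4, hC7, hA7]
  abel

end Aux


/-- The ψ-sum
`E ⊕_ψ F = {Σᵢ Xᵢ⊗bᵢ + Y | Σᵢ ψ(θ_E(Xᵢ)(a))bᵢ = θ_F(Y)(ψ(a)) for all a}` (with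
`ψ = algebraMap A B` and `E ⊗_A B` realised as `B ⊗[A] E`) is a Lie pseudoalgebra over
`B`: it is a `B`-submodule of `(E ⊗_A B) ⊕ F`, and carries a bracket, well defined by
the stated formula (for every representation of the elements as sums of elementary
tensors), which is bilinear, antisymmetric, satisfies the Jacobi identity and the
Leibniz rule for the anchor `Σᵢ Xᵢ⊗bᵢ + Y ↦ θ_F(Y)`. -/
theorem psi_sum_is_lie_pseudoalgebra
    (K A B E F : Type*) [Field K] [CommRing A] [CommRing B]
    [Algebra K A] [Algebra K B] [Algebra A B] [IsScalarTower K A B]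
    [LieRing E] [Module K E] [LieAlgebra K E] [Module A E] [IsScalarTower K A E]
    [LieRing F] [Module K F] [LieAlgebra K F] [Module B F] [IsScalarTower K B F]
    (θE : E →ₗ[A] Derivation K A A)
    (hθE : ∀ X Y : E, θE ⁅X, Y⁆ = ⁅θE X, θE Y⁆)
    (hLeibE : ∀ (X Y : E) (a : A), ⁅X, a • Y⁆ = a • ⁅X, Y⁆ + θE X a • Y)
    (θF : F →ₗ[B] Derivation K B B)
    (hθF : ∀ X Y : F, θF ⁅X, Y⁆ = ⁅θF X, θF Y⁆)
    (hLeibF : ∀ (X Y : F) (b : B), ⁅X, b • Y⁆ = b • ⁅X, Y⁆ + θF X b • Y) :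
    -- S is the ψ-sum, described via arbitrary representations Σᵢ bᵢ ⊗ Xᵢ of the first
    -- component
    ∀ S : Set ((B ⊗[A] E) × F),
      S = {t : (B ⊗[A] E) × F |
            ∀ (n : ℕ) (X : Fin n → E) (b : Fin n → B),
              t.1 = ∑ i, b i ⊗ₜ X i →
              ∀ a : A,
                (∑ i, algebraMap A B (θE (X i) a) * b i) = θF t.2 (algebraMap A B a)} →
      -- S is a B-submodule
      ((0 : (B ⊗[A] E) × F) ∈ S ∧
       (∀ t ∈ S, ∀ t' ∈ S, t + t' ∈ S) ∧
       (∀ (b : B), ∀ t ∈ S, b • t ∈ S)) ∧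
      -- S carries the Lie pseudoalgebra bracket
      (∃ br : ((B ⊗[A] E) × F) → ((B ⊗[A] E) × F) → ((B ⊗[A] E) × F),
        -- closure
        (∀ t ∈ S, ∀ t' ∈ S, br t t' ∈ S) ∧
        -- the bracket is well defined by the formula, for all representations
        (∀ t ∈ S, ∀ t' ∈ S,
          ∀ (n : ℕ) (X : Fin n → E) (b : Fin n → B)
            (m : ℕ) (X' : Fin m → E) (b' : Fin m → B),
            t.1 = ∑ i, b i ⊗ₜ X i → t'.1 = ∑ j, b' j ⊗ₜ X' j →
            br t t' =
              (∑ i, ∑ j, (b i * b' j) ⊗ₜ ⁅X i, X' j⁆ +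
                 ∑ j, (θF t.2 (b' j)) ⊗ₜ X' j - ∑ i, (θF t'.2 (b i)) ⊗ₜ X i,
               ⁅t.2, t'.2⁆)) ∧
        -- bilinearity on S
        (∀ t ∈ S, ∀ t' ∈ S, ∀ t'' ∈ S, br (t + t') t'' = br t t'' + br t' t'') ∧
        (∀ t ∈ S, ∀ t' ∈ S, ∀ t'' ∈ S, br t (t' + t'') = br t t' + br t t'') ∧
        -- antisymmetry and Jacobi identity on S
        (∀ t ∈ S, ∀ t' ∈ S, br t t' = -br t' t) ∧
        (∀ t ∈ S, ∀ t' ∈ S, ∀ t'' ∈ S,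
          br t (br t' t'') = br (br t t') t'' + br t' (br t t'')) ∧
        -- the anchor t ↦ θF t.2 is a morphism of Lie algebras on S
        (∀ t ∈ S, ∀ t' ∈ S, θF (br t t').2 = ⁅θF t.2, θF t'.2⁆) ∧
        -- Leibniz rule with respect to the anchor
        (∀ t ∈ S, ∀ t' ∈ S, ∀ b : B,
          br t (b • t') = b • br t t' + θF t.2 b • t')) := by
  intro S hS
  subst hS
  have memiff : ∀ t : (B ⊗[A] E) × F,
      (t ∈ {t : (B ⊗[A] E) × F |
            ∀ (n : ℕ) (X : Fin n → E) (b : Fin n → B),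
              t.1 = ∑ i, b i ⊗ₜ X i →
              ∀ a : A,
                (∑ i, algebraMap A B (θE (X i) a) * b i) =
                  θF t.2 (algebraMap A B a)}) ↔
      (∀ a : A, PhiMap (K := K) θE a t.1 = θF t.2 (algebraMap A B a)) := by
    intro t
    constructor
    · intro h a
      obtain ⟨n, bb, XX, hx⟩ := exists_rep t.1
      rw [hx, map_sum]
      simp only [PhiMap_tmul]
      exact h n XX bb hx a
    · intro h n X b hr a
      exact rep_constraint θE θF b X t.2 t.1 hr h a
  choose rn rb rX hrep using exists_rep (A := A) (B := B) (E := E)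
  set br : ((B ⊗[A] E) × F) → ((B ⊗[A] E) × F) → ((B ⊗[A] E) × F) :=
    fun t u => (Vgen (A := A) θF (rb t.1) (rX t.1) (rb u.1) (rX u.1) t.2 u.2,
      ⁅t.2, u.2⁆) with hbr
  have hfst : ∀ t u : (B ⊗[A] E) × F,
      (br t u).1 = Vgen (A := A) θF (rb t.1) (rX t.1) (rb u.1) (rX u.1) t.2 u.2 := by
    intro t u; rw [hbr]
  have hsnd : ∀ t u : (B ⊗[A] E) × F, (br t u).2 = ⁅t.2, u.2⁆ := by
    intro t u; rw [hbr]
  have wd : ∀ t u : (B ⊗[A] E) × F,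
      (∀ a : A, PhiMap (K := K) θE a t.1 = θF t.2 (algebraMap A B a)) →
      (∀ a : A, PhiMap (K := K) θE a u.1 = θF u.2 (algebraMap A B a)) →
      ∀ (ι κ : Type) [Fintype ι] [Fintype κ]
        (bb : ι → B) (XX : ι → E) (bb' : κ → B) (XX' : κ → E),
        t.1 = ∑ i, bb i ⊗ₜ XX i → u.1 = ∑ j, bb' j ⊗ₜ XX' j →
        br t u = (Vgen (A := A) θF bb XX bb' XX' t.2 u.2, ⁅t.2, u.2⁆) := by
    intro t u ht hu ι κ _ _ bb XX bb' XX' h1 h2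
    refine Prod.ext ?_ (hsnd t u)
    rw [hfst]
    exact Vgen_indep θE hLeibE θF (rb t.1) (rX t.1) bb XX (rb u.1) (rX u.1) bb' XX'
      t.2 u.2 t.1 u.1 ht hu (hrep t.1) h1 (hrep u.1) h2
  -- closure, Φ-form
  have hclos : ∀ t u : (B ⊗[A] E) × F,
      (∀ a : A, PhiMap (K := K) θE a t.1 = θF t.2 (algebraMap A B a)) →
      (∀ a : A, PhiMap (K := K) θE a u.1 = θF u.2 (algebraMap A B a)) →
      (∀ a : A, PhiMap (K := K) θE a (br t u).1 = θF (br t u).2 (algebraMap A B a)) := by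
    intro t u ht hu a
    rw [hfst, hsnd]
    exact Phi_Vgen θE θF hθE hθF (rb t.1) (rX t.1) (rb u.1) (rX u.1) t.2 u.2
      (rep_constraint θE θF (rb t.1) (rX t.1) t.2 t.1 (hrep t.1) ht)
      (rep_constraint θE θF (rb u.1) (rX u.1) u.2 u.1 (hrep u.1) hu) a
  -- antisymmetry, unconditional
  have hanti : ∀ t u : (B ⊗[A] E) × F, br t u = -br u t := by
    intro t u
    refine Prod.ext ?_ ?_
    · have h1 : (-br u t).1 = -(br u t).1 := rfl
      rw [hfst, h1, hfst]
      exact Vgen_skew θF (rb t.1) (rX t.1) (rb u.1) (rX u.1) t.2 u.2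
    · have h1 : (-br u t).2 = -(br u t).2 := rfl
      rw [hsnd, h1, hsnd]
      exact (lie_skew t.2 u.2).symm
  -- left additivity, needs only the right argument to be constrained
  have hleft : ∀ t t' w : (B ⊗[A] E) × F,
      (∀ a : A, PhiMap (K := K) θE a w.1 = θF w.2 (algebraMap A B a)) →
      br (t + t') w = br t w + br t' w := by
    intro t t' w hw
    have hc'' := rep_constraint θE θF (rb w.1) (rX w.1) w.2 w.1 (hrep w.1) hw
    have key : ∀ u : (B ⊗[A] E) × F,
        (br u w).1 = Hmap θE hLeibE θF (rb w.1) (rX w.1) w.2 hc'' u.1 +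
          ∑ j, (θF u.2 (rb w.1 j)) ⊗ₜ rX w.1 j := by
      intro u
      rw [hfst,
        Vgen_eq_Hmap θE hLeibE θF (rb u.1) (rX u.1) (rb w.1) (rX w.1) u.2 w.2 hc'',
        ← hrep u.1]
    refine Prod.ext ?_ ?_
    · have hadd : (br t w + br t' w).1 = (br t w).1 + (br t' w).1 := rfl
      rw [key, hadd, key t, key t']
      have e1 : (t + t').1 = t.1 + t'.1 := rfl
      have e2 : (t + t').2 = t.2 + t'.2 := rfl
      rw [e1, e2, map_add]
      have e3 : ∀ j, (θF (t.2 + t'.2) (rb w.1 j)) ⊗ₜ[A] rX w.1 j =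
          (θF t.2 (rb w.1 j)) ⊗ₜ[A] rX w.1 j + (θF t'.2 (rb w.1 j)) ⊗ₜ[A] rX w.1 j := by
        intro j
        rw [map_add, Derivation.add_apply, TensorProduct.add_tmul]
      simp only [e3, Finset.sum_add_distrib]
      abel
    · have hadd : (br t w + br t' w).2 = (br t w).2 + (br t' w).2 := rfl
      rw [hsnd, hadd, hsnd, hsnd]
      have e2 : (t + t').2 = t.2 + t'.2 := rfl
      rw [e2, add_lie]
  constructor
  · -- submodule
    refine ⟨?_, ?_, ?_⟩
    · rw [memiff]
      intro a
      simp
    · intro t ht t' ht'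
      rw [memiff] at ht ht' ⊢
      intro a
      have e1 : (t + t').1 = t.1 + t'.1 := rfl
      have e2 : (t + t').2 = t.2 + t'.2 := rfl
      rw [e1, e2, map_add, ht a, ht' a, map_add]
      rfl
    · intro c t ht
      rw [memiff] at ht ⊢
      intro a
      have e1 : (c • t).1 = c • t.1 := rfl
      have e2 : (c • t).2 = c • t.2 := rfl
      rw [e1, e2, PhiMap_smul, ht a, map_smul]
      rfl
  · refine ⟨br, ?_, ?_, ?_, ?_, ?_, ?_, ?_, ?_⟩
    · -- closure
      intro t ht t' ht'
      rw [memiff] at ht ht' ⊢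
      exact hclos t t' ht ht'
    · -- well-definedness
      intro t ht t' ht' n X b m X' b' h1 h2
      rw [memiff] at ht ht'
      exact wd t t' ht ht' (Fin n) (Fin m) b X b' X' h1 h2
    · -- left additivity
      intro t ht t' ht' t'' ht''
      rw [memiff] at ht''
      exact hleft t t' t'' ht''
    · -- right additivity
      intro t ht t' ht' t'' ht''
      rw [memiff] at ht
      rw [hanti t (t' + t''), hleft t' t'' t ht, hanti t t', hanti t t'', neg_add]
    · -- antisymmetry
      intro t _ t' _
      exact hanti t t'
    · -- Jacobi
      intro t ht t' ht' t'' ht''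
      rw [memiff] at ht ht' ht''
      have h1 : (br t' t'').1 =
          ∑ s, repc θF (rb t'.1) (rb t''.1) t'.2 t''.2 s ⊗ₜ
            repZ (rX t'.1) (rX t''.1) s := by
        rw [hfst, rep_sum]
      have h2 : (br t t').1 =
          ∑ s, repc θF (rb t.1) (rb t'.1) t.2 t'.2 s ⊗ₜ
            repZ (rX t.1) (rX t'.1) s := by
        rw [hfst, rep_sum]
      have h3 : (br t t'').1 =
          ∑ s, repc θF (rb t.1) (rb t''.1) t.2 t''.2 s ⊗ₜ
            repZ (rX t.1) (rX t''.1) s := by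
        rw [hfst, rep_sum]
      have e1 : (br t' t'').2 = ⁅t'.2, t''.2⁆ := hsnd t' t''
      have e2 : (br t t').2 = ⁅t.2, t'.2⁆ := hsnd t t'
      have e3 : (br t t'').2 = ⁅t.2, t''.2⁆ := hsnd t t''
      rw [wd t (br t' t'') ht (hclos t' t'' ht' ht'') _ _
            (rb t.1) (rX t.1) _ _ (hrep t.1) h1,
          wd (br t t') t'' (hclos t t' ht ht') ht'' _ _
            _ _ (rb t''.1) (rX t''.1) h2 (hrep t''.1),
          wd t' (br t t'') ht' (hclos t t'' ht ht'') _ _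
            (rb t'.1) (rX t'.1) _ _ (hrep t'.1) h3]
      rw [e1, e2, e3]
      refine Prod.ext ?_ ?_
      · show Vgen (A := A) θF _ _ _ _ _ _ = _ + _
        exact Vgen_jacobi θF hθF (rb t.1) (rX t.1) (rb t'.1) (rX t'.1)
          (rb t''.1) (rX t''.1) t.2 t'.2 t''.2
      · show ⁅t.2, ⁅t'.2, t''.2⁆⁆ = _ + _
        exact leibniz_lie t.2 t'.2 t''.2
    · -- anchor
      intro t _ t' _
      rw [hsnd]
      exact hθF t.2 t'.2
    · -- Leibniz
      intro t ht t' ht' c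
      rw [memiff] at ht ht'
      have hsm : ∀ a : A, PhiMap (K := K) θE a ((c • t').1) =
          θF ((c • t').2) (algebraMap A B a) := by
        intro a
        have e1 : (c • t').1 = c • t'.1 := rfl
        have e2 : (c • t').2 = c • t'.2 := rfl
        rw [e1, e2, PhiMap_smul, ht' a, map_smul]
        rfl
      have hrepc : (c • t').1 = ∑ j, (c * rb t'.1 j) ⊗ₜ rX t'.1 j := by
        have e1 : (c • t').1 = c • t'.1 := rfl
        rw [e1]
        conv_lhs => rw [hrep t'.1]
        rw [Finset.smul_sum]
        exact Finset.sum_congr rfl fun j _ => by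
          rw [TensorProduct.smul_tmul', smul_eq_mul]
      rw [wd t (c • t') ht hsm _ _ (rb t.1) (rX t.1) _ _ (hrep t.1) hrepc]
      have e2 : (c • t').2 = c • t'.2 := rfl
      rw [e2]
      refine Prod.ext ?_ ?_
      · show Vgen (A := A) θF _ _ _ _ _ _ = (c • br t t').1 + (θF t.2 c • t').1
        have f1 : (c • br t t').1 = c • (br t t').1 := rfl
        have f2 : (θF t.2 c • t').1 = θF t.2 c • t'.1 := rfl
        rw [f1, f2, hfst,
          Vgen_smul_right θF (rb t.1) (rX t.1) (rb t'.1) (rX t'.1) t.2 t'.2 c,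
          ← hrep t'.1]
      · show ⁅t.2, c • t'.2⁆ = (c • br t t').2 + (θF t.2 c • t').2
        have f1 : (c • br t t').2 = c • (br t t').2 := rfl
        have f2 : (θF t.2 c • t').2 = θF t.2 c • t'.2 := rfl
        rw [f1, f2, hsnd]
        exact hLeibF t.2 t'.2 c
end

section
/- Let (E,A) and (F,B) be Lie pseudoalgebras, ψ : A → B an algebra morphism, and Ψ : E → F a map of A-modules (B viewed as A-module via ψ). Let Ψ̃ : E⊗_A B → F be the B-map X⊗b ↦ Ψ(X)b, and let G = {x + Ψ̃(x) | x ∈ E⊗_A B} ⊆ (E⊗_A B) ⊕ F be the graph. Then (Ψ, ψ) is a morphism of Lie pseudoalgebras (i.e., ψ(θ_E(X)(a)) = θ_F(Ψ(X))(ψ(a)) and Ψ([X₁,X₂]) = [Ψ(X₁),Ψ(X₂)] for all X, X₁, X₂ ∈ E, a ∈ A) if and only if G is contained in the ψ-sum E ⊕_ψ F and is closed under its Lie bracket, i.e., G is a Lie subpseudoalgebra of E ⊕_ψ F over B. -/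
open TensorProduct

private lemma sum_lie_gen {L : Type*} [LieRing L] {ι : Type*} (s : Finset ι)
    (u : ι → L) (v : L) : ⁅∑ i ∈ s, u i, v⁆ = ∑ i ∈ s, ⁅u i, v⁆ :=
  map_sum (AddMonoidHom.mk' (fun x => ⁅x, v⁆) (fun a b => add_lie a b v)) u s

private lemma lie_sum_gen {L : Type*} [LieRing L] {ι : Type*} (s : Finset ι)
    (u : L) (v : ι → L) : ⁅u, ∑ i ∈ s, v i⁆ = ∑ i ∈ s, ⁅u, v i⁆ :=
  map_sum (AddMonoidHom.mk' (fun x => ⁅u, x⁆) (fun a b => lie_add u a b)) v s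

private lemma deriv_sum_apply {K B : Type*} [CommRing K] [CommRing B] [Algebra K B]
    {ι : Type*} (s : Finset ι) (d : ι → Derivation K B B) (c : B) :
    (∑ i ∈ s, d i) c = ∑ i ∈ s, d i c :=
  map_sum (AddMonoidHom.mk' (fun D : Derivation K B B => D c)
    (fun a b => by simp)) d s

private lemma lie_smul_smul {K B F : Type*} [Field K] [CommRing B] [Algebra K B]
    [LieRing F] [Module K F] [LieAlgebra K F] [Module B F] [IsScalarTower K B F]
    (θF : F →ₗ[B] Derivation K B B)
    (hLeibF : ∀ (X Y : F) (b : B), ⁅X, b • Y⁆ = b • ⁅X, Y⁆ + θF X b • Y)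
    (u v : F) (c c' : B) :
    ⁅c • u, c' • v⁆ = (c * c') • ⁅u, v⁆ + (c * θF u c') • v - (c' * θF v c) • u := by
  have h3 : ⁅c • u, v⁆ = c • ⁅u, v⁆ - θF v c • u := by
    rw [← lie_skew, hLeibF, ← lie_skew u v]
    module
  rw [hLeibF, h3, map_smul, Derivation.smul_apply, smul_eq_mul, smul_sub, smul_smul,
    smul_smul, mul_comm c' c]
  abel

/-- Let `(E,A)`, `(F,B)` be Lie pseudoalgebras, `ψ = algebraMap A B`, and
`Ψ : E → F` an `A`-module map over `ψ`, with induced `B`-map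
`Ψ̃ : E ⊗_A B → F`, `X ⊗ b ↦ b • Ψ(X)` (the base change `E ⊗_A B` is realised as
`B ⊗[A] E`).  Then `(Ψ, ψ)` is a morphism of Lie pseudoalgebras iff the graph
`G = {x + Ψ̃(x)}` is contained in the ψ-sum `E ⊕_ψ F` and is closed under its Lie
bracket, i.e. `G` is a Lie subpseudoalgebra of `E ⊕_ψ F` over `B`. -/
theorem morphism_iff_graph_subalgebra
    (K A B E F : Type*) [Field K] [CommRing A] [CommRing B]
    [Algebra K A] [Algebra K B] [Algebra A B] [IsScalarTower K A B]
    [LieRing E] [Module K E] [LieAlgebra K E] [Module A E] [IsScalarTower K A E]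
    [LieRing F] [Module K F] [LieAlgebra K F] [Module B F] [IsScalarTower K B F]
    (θE : E →ₗ[A] Derivation K A A)
    (hθE : ∀ X Y : E, θE ⁅X, Y⁆ = ⁅θE X, θE Y⁆)
    (hLeibE : ∀ (X Y : E) (a : A), ⁅X, a • Y⁆ = a • ⁅X, Y⁆ + θE X a • Y)
    (θF : F →ₗ[B] Derivation K B B)
    (hθF : ∀ X Y : F, θF ⁅X, Y⁆ = ⁅θF X, θF Y⁆)
    (hLeibF : ∀ (X Y : F) (b : B), ⁅X, b • Y⁆ = b • ⁅X, Y⁆ + θF X b • Y)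
    -- Ψ : E → F, an A-module map over ψ
    (Ψ : E → F)
    (hΨadd : ∀ X Y : E, Ψ (X + Y) = Ψ X + Ψ Y)
    (hΨsmul : ∀ (a : A) (X : E), Ψ (a • X) = algebraMap A B a • Ψ X)
    -- the induced B-map Ψ̃ : E ⊗_A B → F
    (Ψt : (B ⊗[A] E) →ₗ[B] F)
    (hΨt : ∀ (b : B) (X : E), Ψt (b ⊗ₜ X) = b • Ψ X) :
    -- S is the ψ-sum, G the graph of (Ψ, ψ)
    ∀ (S G : Set ((B ⊗[A] E) × F)),
      S = {t : (B ⊗[A] E) × F |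
            ∀ (n : ℕ) (X : Fin n → E) (b : Fin n → B),
              t.1 = ∑ i, b i ⊗ₜ X i →
              ∀ a : A,
                (∑ i, algebraMap A B (θE (X i) a) * b i) = θF t.2 (algebraMap A B a)} →
      G = {t : (B ⊗[A] E) × F | ∃ x : B ⊗[A] E, t = (x, Ψt x)} →
      (((∀ (X : E) (a : A),
           algebraMap A B (θE X a) = θF (Ψ X) (algebraMap A B a)) ∧
        (∀ X Y : E, Ψ ⁅X, Y⁆ = ⁅Ψ X, Ψ Y⁆)) ↔
       (G ⊆ S ∧
        -- G is closed under the bracket of the ψ-sum, which is given (for any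
        -- representations of the elements) by the formula below
        (∀ t ∈ G, ∀ t' ∈ G,
          ∀ (n : ℕ) (X : Fin n → E) (b : Fin n → B)
            (m : ℕ) (X' : Fin m → E) (b' : Fin m → B),
            t.1 = ∑ i, b i ⊗ₜ X i → t'.1 = ∑ j, b' j ⊗ₜ X' j →
            ((∑ i, ∑ j, (b i * b' j) ⊗ₜ ⁅X i, X' j⁆ +
                ∑ j, (θF t.2 (b' j)) ⊗ₜ X' j - ∑ i, (θF t'.2 (b i)) ⊗ₜ X i,
              ⁅t.2, t'.2⁆) : (B ⊗[A] E) × F) ∈ G))) := by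
  intro S G hS hG
  subst hS; subst hG
  -- a key computation: value of θF (Ψt (∑ bᵢ ⊗ Xᵢ)) at any c
  have hval : ∀ (n : ℕ) (X : Fin n → E) (b : Fin n → B) (c : B),
      θF (Ψt (∑ i, b i ⊗ₜ[A] X i)) c = ∑ i, b i * θF (Ψ (X i)) c := by
    intro n X b c
    rw [map_sum]
    simp only [hΨt]
    rw [map_sum, deriv_sum_apply]
    exact Finset.sum_congr rfl fun i _ => by
      rw [map_smul, Derivation.smul_apply, smul_eq_mul]
  constructor
  · rintro ⟨h1, h2⟩
    refine ⟨?_, ?_⟩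
    · rintro t ⟨x, rfl⟩
      intro n X b hrep a
      replace hrep : x = ∑ i, b i ⊗ₜ[A] X i := hrep
      subst hrep
      show ∑ i, algebraMap A B (θE (X i) a) * b i
          = θF (Ψt (∑ i, b i ⊗ₜ[A] X i)) (algebraMap A B a)
      rw [hval]
      exact Finset.sum_congr rfl fun i _ => by rw [h1, mul_comm]
    · rintro t ⟨x, rfl⟩ t' ⟨x', rfl⟩ n X b m X' b' hrep hrep'
      replace hrep : x = ∑ i, b i ⊗ₜ[A] X i := hrep
      replace hrep' : x' = ∑ j, b' j ⊗ₜ[A] X' j := hrep'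
      subst hrep; subst hrep'
      have hmain : Ψt (∑ i, ∑ j, (b i * b' j) ⊗ₜ[A] ⁅X i, X' j⁆ +
            ∑ j, (θF (Ψt (∑ i, b i ⊗ₜ[A] X i)) (b' j)) ⊗ₜ[A] X' j -
            ∑ i, (θF (Ψt (∑ j, b' j ⊗ₜ[A] X' j)) (b i)) ⊗ₜ[A] X i)
          = ⁅Ψt (∑ i, b i ⊗ₜ[A] X i), Ψt (∑ j, b' j ⊗ₜ[A] X' j)⁆ := by
        have hr : Ψt (∑ i, b i ⊗ₜ[A] X i) = ∑ i, b i • Ψ (X i) := by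
          rw [map_sum]; simp only [hΨt]
        have hr' : Ψt (∑ j, b' j ⊗ₜ[A] X' j) = ∑ j, b' j • Ψ (X' j) := by
          rw [map_sum]; simp only [hΨt]
        simp only [hval]
        rw [map_sub, map_add]
        simp only [map_sum, hΨt, h2]
        rw [sum_lie_gen]
        simp only [lie_sum_gen, lie_smul_smul θF hLeibF]
        simp only [Finset.sum_add_distrib, Finset.sum_sub_distrib, Finset.sum_smul]
        have hswap : ∑ j, ∑ i, (b i * θF (Ψ (X i)) (b' j)) • Ψ (X' j)
            = ∑ i, ∑ j, (b i * θF (Ψ (X i)) (b' j)) • Ψ (X' j) :=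
          Finset.sum_comm
        rw [hswap]
      exact ⟨_, by rw [hmain]⟩
  · rintro ⟨hGS, hcl⟩
    constructor
    · intro X a
      have hmem : ((1 : B) ⊗ₜ[A] X, Ψt ((1 : B) ⊗ₜ[A] X))
          ∈ {t : (B ⊗[A] E) × F | ∃ x : B ⊗[A] E, t = (x, Ψt x)} := ⟨_, rfl⟩
      have h := hGS hmem 1 (fun _ => X) (fun _ => 1) (by simp) a
      simpa [hΨt] using h
    · intro X Y
      have hmem : ∀ Z : E, ((1 : B) ⊗ₜ[A] Z, Ψt ((1 : B) ⊗ₜ[A] Z))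
          ∈ {t : (B ⊗[A] E) × F | ∃ x : B ⊗[A] E, t = (x, Ψt x)} := fun Z => ⟨_, rfl⟩
      have h := hcl _ (hmem X) _ (hmem Y) 1 (fun _ => X) (fun _ => 1)
        1 (fun _ => Y) (fun _ => 1) (by simp) (by simp)
      simp only [Fin.sum_univ_one, one_mul, Derivation.map_one_eq_zero,
        TensorProduct.zero_tmul, add_zero, sub_zero, hΨt, one_smul,
        Set.mem_setOf_eq] at h
      obtain ⟨x0, hx0⟩ := h
      rw [Prod.mk.injEq] at hx0
      obtain ⟨h1, h2⟩ := hx0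
      subst h1
      rw [h2, hΨt, one_smul]
end

section
/- Let (E,A) and (F,B) be Lie pseudoalgebras with E and F finitely generated projective modules, and ψ : A → B an algebra morphism. Let Ψ : F → E⊗_A B be a B-module map with dual map Ψ* : E*_A → F*_B determined by ⟨Ψ*(ξ), Y⟩ = I(Ψ(Y))(ξ). Then (Ψ, ψ) is a comorphism of Lie pseudoalgebras if and only if Ψ* commutes with the exterior differentials in degrees 0 and 1: d_F(ψ(a)) = Ψ*(d_E(a)) for all a ∈ A, and d_F(Ψ*(ξ)) = Ψ*(d_E(ξ)) for all ξ ∈ E*_A (where Ψ* is extended to ∧²). -/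
open TensorProduct

/-- For finitely generated projective Lie pseudoalgebras `(E,A)`, `(F,B)`
and `ψ = algebraMap A B`, a `B`-module map `Ψ : F → E ⊗_A B` (realised as
`Ψ : F →ₗ[B] B ⊗[A] E`) is a comorphism of Lie pseudoalgebras iff its dual map
`Ψ* : E*_A → F*_B`, `⟨Ψ*(ξ), Y⟩ = I(Ψ(Y))(ξ) = pair ξ (Ψ Y)`, commutes with the
exterior differentials in degrees 0 and 1 (`d_F ∘ ψ = Ψ* ∘ d_E` on `A` and
`d_F ∘ Ψ* = Ψ* ∘ d_E` on `E*_A`, evaluated against elements and wedges). -/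
theorem comorphism_iff_chain_map
    (K A B E F : Type*) [Field K] [CommRing A] [CommRing B]
    [Algebra K A] [Algebra K B] [Algebra A B] [IsScalarTower K A B]
    [LieRing E] [Module K E] [LieAlgebra K E] [Module A E] [IsScalarTower K A E]
    [Module.Finite A E] [Module.Projective A E]
    [LieRing F] [Module K F] [LieAlgebra K F] [Module B F] [IsScalarTower K B F]
    [Module.Finite B F] [Module.Projective B F]
    (θE : E →ₗ[A] Derivation K A A)
    (hθE : ∀ X Y : E, θE ⁅X, Y⁆ = ⁅θE X, θE Y⁆)
    (hLeibE : ∀ (X Y : E) (a : A), ⁅X, a • Y⁆ = a • ⁅X, Y⁆ + θE X a • Y)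
    (θF : F →ₗ[B] Derivation K B B)
    (hθF : ∀ X Y : F, θF ⁅X, Y⁆ = ⁅θF X, θF Y⁆)
    (hLeibF : ∀ (X Y : F) (b : B), ⁅X, b • Y⁆ = b • ⁅X, Y⁆ + θF X b • Y)
    -- the canonical pairing I : (E ⊗_A B) × E*_A → B,  pair ξ (Σ bᵢ ⊗ Xᵢ) = Σ ψ(ξ Xᵢ) bᵢ
    (pair : (E →ₗ[A] A) → (B ⊗[A] E) →ₗ[B] B)
    (hpair : ∀ (ξ : E →ₗ[A] A) (b : B) (X : E),
      pair ξ (b ⊗ₜ X) = algebraMap A B (ξ X) * b)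
    -- the degree-0 differential of E:  ⟨d_E a, X⟩ = θ_E(X)(a)
    (dE : A → (E →ₗ[A] A))
    (hdE : ∀ (a : A) (X : E), dE a X = θE X a)
    -- Ψ : F → E ⊗_A B, a B-module map
    (Ψ : F →ₗ[B] (B ⊗[A] E)) :
    -- (Ψ, ψ) is a comorphism of Lie pseudoalgebras:
    ((∀ (Y : F) (n : ℕ) (X : Fin n → E) (b : Fin n → B),
        Ψ Y = ∑ k, b k ⊗ₜ X k →
        ∀ a : A, θF Y (algebraMap A B a) = ∑ k, b k * algebraMap A B (θE (X k) a)) ∧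
     (∀ (Y₁ Y₂ : F) (n : ℕ) (X₁ : Fin n → E) (b₁ : Fin n → B)
         (m : ℕ) (X₂ : Fin m → E) (b₂ : Fin m → B),
        Ψ Y₁ = ∑ k, b₁ k ⊗ₜ X₁ k → Ψ Y₂ = ∑ l, b₂ l ⊗ₜ X₂ l →
        Ψ ⁅Y₁, Y₂⁆ =
          ∑ k, ∑ l, (b₁ k * b₂ l) ⊗ₜ ⁅X₁ k, X₂ l⁆ +
            ∑ l, (θF Y₁ (b₂ l)) ⊗ₜ X₂ l - ∑ k, (θF Y₂ (b₁ k)) ⊗ₜ X₁ k)) ↔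
    -- iff Ψ* is a chain map in degrees 0 and 1:
    ((∀ (a : A) (Y : F),
        -- degree 0 :  ⟨d_F(ψ a), Y⟩ = ⟨Ψ*(d_E a), Y⟩
        θF Y (algebraMap A B a) = pair (dE a) (Ψ Y)) ∧
     (∀ (ξ : E →ₗ[A] A) (Y₁ Y₂ : F)
         (n : ℕ) (X₁ : Fin n → E) (b₁ : Fin n → B)
         (m : ℕ) (X₂ : Fin m → E) (b₂ : Fin m → B),
        Ψ Y₁ = ∑ k, b₁ k ⊗ₜ X₁ k → Ψ Y₂ = ∑ l, b₂ l ⊗ₜ X₂ l →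
        -- degree 1 :  ⟨d_F(Ψ* ξ), Y₁ ∧ Y₂⟩ = ⟨Ψ*(d_E ξ), Y₁ ∧ Y₂⟩
        θF Y₁ (pair ξ (Ψ Y₂)) - θF Y₂ (pair ξ (Ψ Y₁)) - pair ξ (Ψ ⁅Y₁, Y₂⁆) =
          ∑ k, ∑ l,
            algebraMap A B
              (θE (X₁ k) (ξ (X₂ l)) - θE (X₂ l) (ξ (X₁ k)) - ξ ⁅X₁ k, X₂ l⁆) *
            (b₁ k * b₂ l))) := by

  classical
  -- every element of `B ⊗[A] E` has a finite representation by pure tensors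
  have hrepex : ∀ u : B ⊗[A] E, ∃ (n : ℕ) (b : Fin n → B) (X : Fin n → E),
      u = ∑ k, b k ⊗ₜ X k := by
    intro u
    induction u using TensorProduct.induction_on with
    | zero => exact ⟨0, ![], ![], by simp⟩
    | tmul b x => exact ⟨1, ![b], ![x], by simp⟩
    | add u v hu hv =>
      obtain ⟨n, b, X, hu⟩ := hu
      obtain ⟨m, c, Z, hv⟩ := hv
      refine ⟨n + m, Fin.append b c, Fin.append X Z, ?_⟩
      rw [Fin.sum_univ_add]
      simp [Fin.append_left, Fin.append_right, hu, hv]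
  -- pairing of a representation
  have hpairrep : ∀ (ξ : E →ₗ[A] A) (n : ℕ) (b : Fin n → B) (X : Fin n → E),
      pair ξ (∑ k, b k ⊗ₜ X k) = ∑ k, algebraMap A B (ξ (X k)) * b k := by
    intro ξ n b X
    rw [map_sum]
    exact Finset.sum_congr rfl fun k _ => hpair ξ (b k) (X k)
  -- a finite dual basis for the f.g. projective module E
  obtain ⟨N, f, g, -, -, hfg⟩ := Module.Finite.exists_comp_eq_id_of_projective A E
  set e : Fin N → E := fun i => f (Pi.single i 1) with he
  set ε : Fin N → (E →ₗ[A] A) := fun i => (LinearMap.proj i) ∘ₗ g with hε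
  have hdual : ∀ x : E, ∑ i, ε i x • e i = x := by
    intro x
    have h1 : ∀ i, ε i x • e i = f (Pi.single i (g x i)) := by
      intro i
      rw [he, hε, ← map_smul]
      congr 1
      simp only [LinearMap.coe_comp, Function.comp_apply, LinearMap.proj_apply]
      rw [← Pi.single_smul, smul_eq_mul, mul_one]
    simp_rw [h1]
    rw [← map_sum, Finset.univ_sum_single]
    exact LinearMap.congr_fun hfg x
  -- injectivity of `u ↦ (pair · u)`
  have hexpand : ∀ u : B ⊗[A] E, u = ∑ i, pair (ε i) u ⊗ₜ e i := by
    intro u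
    induction u using TensorProduct.induction_on with
    | zero => simp
    | tmul b x =>
      have : ∀ i, pair (ε i) (b ⊗ₜ[A] x) ⊗ₜ[A] e i = b ⊗ₜ[A] (ε i x • e i) := by
        intro i
        rw [hpair, ← Algebra.smul_def, TensorProduct.smul_tmul]
      rw [Finset.sum_congr rfl fun i _ => this i, ← TensorProduct.tmul_sum, hdual]
    | add u v hu hv =>
      conv_lhs => rw [hu, hv]
      rw [← Finset.sum_add_distrib]
      exact Finset.sum_congr rfl fun i _ => by rw [map_add, TensorProduct.add_tmul]
  have hinj : ∀ u v : B ⊗[A] E, (∀ ξ : E →ₗ[A] A, pair ξ u = pair ξ v) → u = v := by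
    intro u v h
    rw [hexpand u, hexpand v]
    exact Finset.sum_congr rfl fun i _ => by rw [h (ε i)]
  -- degree-0 pairing computation
  have hpairdE : ∀ (a : A) (Y : F) (n : ℕ) (b : Fin n → B) (X : Fin n → E),
      Ψ Y = ∑ k, b k ⊗ₜ X k →
      pair (dE a) (Ψ Y) = ∑ k, b k * algebraMap A B (θE (X k) a) := by
    intro a Y n b X h
    rw [h, hpairrep]
    exact Finset.sum_congr rfl fun k _ => by rw [hdE, mul_comm]
  -- the master computation, valid whenever the degree-0 chain condition holds
  have master : (∀ (a : A) (Y : F), θF Y (algebraMap A B a) = pair (dE a) (Ψ Y)) →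
      ∀ (ξ : E →ₗ[A] A) (Y₁ Y₂ : F) (n : ℕ) (X₁ : Fin n → E) (b₁ : Fin n → B)
        (m : ℕ) (X₂ : Fin m → E) (b₂ : Fin m → B),
        Ψ Y₁ = ∑ k, b₁ k ⊗ₜ X₁ k → Ψ Y₂ = ∑ l, b₂ l ⊗ₜ X₂ l →
        θF Y₁ (pair ξ (Ψ Y₂)) - θF Y₂ (pair ξ (Ψ Y₁)) -
          pair ξ (∑ k, ∑ l, (b₁ k * b₂ l) ⊗ₜ ⁅X₁ k, X₂ l⁆ +
            ∑ l, (θF Y₁ (b₂ l)) ⊗ₜ X₂ l - ∑ k, (θF Y₂ (b₁ k)) ⊗ₜ X₁ k) =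
        ∑ k, ∑ l,
          algebraMap A B
            (θE (X₁ k) (ξ (X₂ l)) - θE (X₂ l) (ξ (X₁ k)) - ξ ⁅X₁ k, X₂ l⁆) *
          (b₁ k * b₂ l) := by
    intro hd0 ξ Y₁ Y₂ n X₁ b₁ m X₂ b₂ h₁ h₂
    have hθψ₁ : ∀ a : A,
        θF Y₁ (algebraMap A B a) = ∑ k, algebraMap A B (θE (X₁ k) a) * b₁ k := by
      intro a
      rw [hd0, h₁, hpairrep]
      exact Finset.sum_congr rfl fun k _ => by rw [hdE]
    have hθψ₂ : ∀ a : A,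
        θF Y₂ (algebraMap A B a) = ∑ l, algebraMap A B (θE (X₂ l) a) * b₂ l := by
      intro a
      rw [hd0, h₂, hpairrep]
      exact Finset.sum_congr rfl fun l _ => by rw [hdE]
    have T1 : θF Y₁ (pair ξ (Ψ Y₂)) =
        ∑ l, (algebraMap A B (ξ (X₂ l)) * θF Y₁ (b₂ l)
          + b₂ l * ∑ k, algebraMap A B (θE (X₁ k) (ξ (X₂ l))) * b₁ k) := by
      rw [h₂, hpairrep, map_sum]
      refine Finset.sum_congr rfl fun l _ => ?_
      rw [Derivation.leibniz, smul_eq_mul, smul_eq_mul, hθψ₁]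
    have T2 : θF Y₂ (pair ξ (Ψ Y₁)) =
        ∑ k, (algebraMap A B (ξ (X₁ k)) * θF Y₂ (b₁ k)
          + b₁ k * ∑ l, algebraMap A B (θE (X₂ l) (ξ (X₁ k))) * b₂ l) := by
      rw [h₁, hpairrep, map_sum]
      refine Finset.sum_congr rfl fun k _ => ?_
      rw [Derivation.leibniz, smul_eq_mul, smul_eq_mul, hθψ₂]
    have T3 : pair ξ (∑ k, ∑ l, (b₁ k * b₂ l) ⊗ₜ ⁅X₁ k, X₂ l⁆ +
          ∑ l, (θF Y₁ (b₂ l)) ⊗ₜ X₂ l - ∑ k, (θF Y₂ (b₁ k)) ⊗ₜ X₁ k) =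
        ∑ k, ∑ l, algebraMap A B (ξ ⁅X₁ k, X₂ l⁆) * (b₁ k * b₂ l)
          + ∑ l, algebraMap A B (ξ (X₂ l)) * θF Y₁ (b₂ l)
          - ∑ k, algebraMap A B (ξ (X₁ k)) * θF Y₂ (b₁ k) := by
      simp only [map_sub, map_add, map_sum, hpair]
    rw [T1, T2, T3]
    have hsplit1 : ∑ l, (algebraMap A B (ξ (X₂ l)) * θF Y₁ (b₂ l)
          + b₂ l * ∑ k, algebraMap A B (θE (X₁ k) (ξ (X₂ l))) * b₁ k) =
        (∑ l, algebraMap A B (ξ (X₂ l)) * θF Y₁ (b₂ l))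
          + ∑ l, b₂ l * ∑ k, algebraMap A B (θE (X₁ k) (ξ (X₂ l))) * b₁ k :=
      Finset.sum_add_distrib
    have hsplit2 : ∑ k, (algebraMap A B (ξ (X₁ k)) * θF Y₂ (b₁ k)
          + b₁ k * ∑ l, algebraMap A B (θE (X₂ l) (ξ (X₁ k))) * b₂ l) =
        (∑ k, algebraMap A B (ξ (X₁ k)) * θF Y₂ (b₁ k))
          + ∑ k, b₁ k * ∑ l, algebraMap A B (θE (X₂ l) (ξ (X₁ k))) * b₂ l :=
      Finset.sum_add_distrib
    rw [hsplit1, hsplit2]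
    have key : (∑ l, b₂ l * ∑ k, algebraMap A B (θE (X₁ k) (ξ (X₂ l))) * b₁ k)
          - (∑ k, b₁ k * ∑ l, algebraMap A B (θE (X₂ l) (ξ (X₁ k))) * b₂ l)
          - ∑ k, ∑ l, algebraMap A B (ξ ⁅X₁ k, X₂ l⁆) * (b₁ k * b₂ l) =
        ∑ k, ∑ l,
          algebraMap A B
            (θE (X₁ k) (ξ (X₂ l)) - θE (X₂ l) (ξ (X₁ k)) - ξ ⁅X₁ k, X₂ l⁆) *
          (b₁ k * b₂ l) := by
      simp only [Finset.mul_sum]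
      rw [Finset.sum_comm (f := fun l k =>
        b₂ l * (algebraMap A B (θE (X₁ k) (ξ (X₂ l))) * b₁ k))]
      simp only [← Finset.sum_sub_distrib]
      refine Finset.sum_congr rfl fun k _ => Finset.sum_congr rfl fun l _ => ?_
      rw [map_sub, map_sub]
      ring
    linear_combination key
  constructor
  · rintro ⟨h1, h2⟩
    have hd0 : ∀ (a : A) (Y : F), θF Y (algebraMap A B a) = pair (dE a) (Ψ Y) := by
      intro a Y
      obtain ⟨n, b, X, hrep⟩ := hrepex (Ψ Y)
      rw [h1 Y n X b hrep a, hpairdE a Y n b X hrep]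
    refine ⟨hd0, ?_⟩
    intro ξ Y₁ Y₂ n X₁ b₁ m X₂ b₂ h₁ h₂
    rw [h2 Y₁ Y₂ n X₁ b₁ m X₂ b₂ h₁ h₂]
    exact master hd0 ξ Y₁ Y₂ n X₁ b₁ m X₂ b₂ h₁ h₂
  · rintro ⟨hd0, hd1⟩
    constructor
    · intro Y n X b hrep a
      rw [hd0 a Y, hpairdE a Y n b X hrep]
    · intro Y₁ Y₂ n X₁ b₁ m X₂ b₂ h₁ h₂
      apply hinj
      intro ξ
      have hM := master hd0 ξ Y₁ Y₂ n X₁ b₁ m X₂ b₂ h₁ h₂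
      have hD := hd1 ξ Y₁ Y₂ n X₁ b₁ m X₂ b₂ h₁ h₂
      linear_combination hM - hD
end
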